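/- arXiv:2404.17035 — 2 statements merged into one kernel-verified Lean document; each statement's English description precedes it below -/
import Mathlib

section
/- If k < 0, then the inclusion l^s_{ℂ,w} → h^{k,s}_{ℂ,w} is compact. -/
/-!
A bounded sequence in `l^s_w` is bounded in every coordinate, so by Tychonoff a subsequence
converges coordinatewise to some `p`, and `p ∈ l^s_w` by Fatou's lemma for sums. The differences
`F (φ n) - p` stay bounded in `l^s_w`, while the extra weights `(1 + |m|^s)^k` tend to `0` as
`|m| → ∞` because `k < 0`: outside a finite set of indices the `h^{k,s}` sum is uniformly small,
and on that finite set each term tends to `0`.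
-/

open Filter Topology

noncomputable section

/-- Membership in the weighted Sobolev sequence space `h^{k,s}_{ℂ,w}`. -/
def hMem (k s : ℝ) (w : ℤ → ℝ) (p : ℤ → ℂ) : Prop :=
  Summable fun m : ℤ => w m * (1 + |(m : ℝ)| ^ s) ^ k * ‖p m‖ ^ s

/-- The norm `‖p‖_{k,s,w} = (∑_{m∈ℤ} w_m (1+|m|^s)^k |p_m|^s)^{1/s}`. -/
noncomputable def hNorm (k s : ℝ) (w : ℤ → ℝ) (p : ℤ → ℂ) : ℝ :=
  (∑' m : ℤ, w m * (1 + |(m : ℝ)| ^ s) ^ k * ‖p m‖ ^ s) ^ (1 / s)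

lemma norm_sub_rpow_le {E : Type*} [SeminormedAddCommGroup E] (a b : E) {s : ℝ} (hs : 1 ≤ s) :
    ‖a - b‖ ^ s ≤ 2 ^ (s - 1) * (‖a‖ ^ s + ‖b‖ ^ s) :=
  calc ‖a - b‖ ^ s ≤ (‖a‖ + ‖b‖) ^ s :=
        Real.rpow_le_rpow (norm_nonneg _) (norm_sub_le a b) (by linarith)
    _ ≤ 2 ^ (s - 1) * (‖a‖ ^ s + ‖b‖ ^ s) := by
        exact_mod_cast NNReal.rpow_add_le_mul_rpow_add_rpow ‖a‖₊ ‖b‖₊ hs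

lemma norm_le_of_mul_rpow_le {E : Type*} [SeminormedAddCommGroup E] {x : E} {w B s : ℝ}
    (hs : 0 < s) (hw : 0 < w) (h : w * ‖x‖ ^ s ≤ B) : ‖x‖ ≤ (B / w) ^ s⁻¹ := by
  have hx : ‖x‖ ^ s ≤ B / w := (le_div_iff₀' hw).mpr h
  exact (Real.le_rpow_inv_iff_of_pos (norm_nonneg x)
    ((Real.rpow_nonneg (norm_nonneg x) s).trans hx) hs).mpr hx

lemma exists_strictMono_tendsto_pi_of_norm_le {ι E : Type*} [Countable ι]
    [NormedAddCommGroup E] [ProperSpace E] {F : ℕ → ι → E} {R : ι → ℝ} (hF : ∀ n i, ‖F n i‖ ≤ R i) :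
    ∃ φ : ℕ → ℕ, StrictMono φ ∧ ∃ p : ι → E, Tendsto (F ∘ φ) atTop (𝓝 p) := by
  obtain ⟨p, -, φ, hφ, hFp⟩ :=
    (isCompact_univ_pi fun i => isCompact_closedBall (0 : E) (R i)).tendsto_subseq
      (x := F) fun n i _ => mem_closedBall_zero_iff.mpr (hF n i)
  exact ⟨φ, hφ, p, hFp⟩

lemma summable_and_tsum_le_of_tendsto {ι α : Type*} {l : Filter α} [l.NeBot]
    {g : α → ι → ℝ} {f : ι → ℝ} {B : ℝ} (hg : ∀ a i, 0 ≤ g a i) (hgs : ∀ a, Summable (g a))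
    (hB : ∀ a, ∑' i, g a i ≤ B) (hlim : ∀ i, Tendsto (fun a => g a i) l (𝓝 (f i))) :
    Summable f ∧ ∑' i, f i ≤ B := by
  have hf : 0 ≤ f := fun i => ge_of_tendsto' (hlim i) fun a => hg a i
  have hfin : ∀ T : Finset ι, ∑ i ∈ T, f i ≤ B := fun T =>
    le_of_tendsto' (tendsto_finsetSum T fun i _ => hlim i) fun a =>
      ((hgs a).sum_le_tsum T fun i _ => hg a i).trans (hB a)
  exact ⟨summable_of_sum_le hf hfin, Real.tsum_le_of_sum_le hf hfin⟩

lemma tendsto_tsum_mul_of_tendsto_cofinite {ι α : Type*} {l : Filter α} {c : ι → ℝ}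
    {g : α → ι → ℝ} {D : ℝ} (hc0 : ∀ i, 0 ≤ c i) (hc : Tendsto c cofinite (𝓝 0))
    (hg : ∀ a i, 0 ≤ g a i) (hgs : ∀ a, Summable (g a)) (hD : ∀ a, ∑' i, g a i ≤ D)
    (hlim : ∀ i, Tendsto (fun a => g a i) l (𝓝 0)) :
    Tendsto (fun a => ∑' i, c i * g a i) l (𝓝 0) := by
  obtain ⟨M, hM⟩ := hc.bddAbove_range_of_cofinite
  have hcg : ∀ a, Summable fun i => c i * g a i := fun a =>
    ((hgs a).mul_left M).of_nonneg_of_le (fun i => mul_nonneg (hc0 i) (hg a i))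
      fun i => mul_le_mul_of_nonneg_right (hM ⟨i, rfl⟩) (hg a i)
  refine tendsto_order.2 ⟨fun b hb => Eventually.of_forall fun a =>
    hb.trans_le (tsum_nonneg fun i => mul_nonneg (hc0 i) (hg a i)), fun ε hε => ?_⟩
  obtain ⟨δ, hδ, hδD⟩ := exists_pos_mul_lt hε D
  obtain ⟨S, hS⟩ : ∃ S : Finset ι, ∀ i ∉ S, c i < δ :=
    ⟨(eventually_cofinite.mp (hc.eventually (gt_mem_nhds hδ))).toFinset, fun i hi => by
      simpa using hi⟩
  have hsplit : ∀ a, ∑' i, c i * g a i ≤ ∑ i ∈ S, c i * g a i + D * δ := by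
    intro a
    have hind : Summable ((S : Set ι).indicator fun i => c i * g a i) := (hcg a).indicator _
    calc ∑' i, c i * g a i
        ≤ ∑' i, ((S : Set ι).indicator (fun i => c i * g a i) i + δ * g a i) := by
          refine (hcg a).tsum_le_tsum (fun i => ?_) (hind.add ((hgs a).mul_left δ))
          by_cases hi : i ∈ S
          · simpa [hi] using mul_nonneg hδ.le (hg a i)
          · simpa [hi] using mul_le_mul_of_nonneg_right (hS i hi).le (hg a i)
      _ = ∑ i ∈ S, c i * g a i + δ * ∑' i, g a i := by
          rw [hind.tsum_add ((hgs a).mul_left δ), sum_eq_tsum_indicator, tsum_mul_left]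
      _ ≤ ∑ i ∈ S, c i * g a i + D * δ := by nlinarith [hD a]
  have hhead : Tendsto (fun a => ∑ i ∈ S, c i * g a i) l (𝓝 0) := by
    simpa using tendsto_finsetSum S fun i _ => (hlim i).const_mul (c i)
  filter_upwards [hhead.eventually (gt_mem_nhds (sub_pos.2 hδD))] with a ha
  linarith [hsplit a]

lemma exists_strictMono_tendsto_of_tsum_mul_rpow_le {ι E : Type*} [Countable ι]
    [NormedAddCommGroup E] [ProperSpace E] {w : ι → ℝ} {s B : ℝ} {F : ℕ → ι → E}
    (hw : ∀ i, 0 < w i) (hs : 0 < s) (hF : ∀ n, Summable fun i => w i * ‖F n i‖ ^ s)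
    (hB : ∀ n, ∑' i, w i * ‖F n i‖ ^ s ≤ B) :
    ∃ φ : ℕ → ℕ, StrictMono φ ∧ ∃ p : ι → E,
      (∀ i, Tendsto (fun n => F (φ n) i) atTop (𝓝 (p i))) ∧
      Summable (fun i => w i * ‖p i‖ ^ s) ∧ ∑' i, w i * ‖p i‖ ^ s ≤ B := by
  have hcoord : ∀ n i, ‖F n i‖ ≤ (B / w i) ^ s⁻¹ := fun n i =>
    norm_le_of_mul_rpow_le hs (hw i)
      (((hF n).le_tsum i fun j _ => mul_nonneg (hw j).le (by positivity)).trans (hB n))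
  obtain ⟨φ, hφ, p, hFp⟩ := exists_strictMono_tendsto_pi_of_norm_le hcoord
  have hpt : ∀ i, Tendsto (fun n => F (φ n) i) atTop (𝓝 (p i)) := tendsto_pi_nhds.mp hFp
  exact ⟨φ, hφ, p, hpt, summable_and_tsum_le_of_tendsto
    (g := fun n i => w i * ‖F (φ n) i‖ ^ s) (fun n i => mul_nonneg (hw i).le (by positivity))
    (fun n => hF (φ n)) (fun n => hB (φ n))
    fun i => ((hpt i).norm.rpow_const (Or.inr hs.le)).const_mul (w i)⟩

lemma summable_and_tsum_mul_norm_sub_rpow_le {ι E : Type*} [SeminormedAddCommGroup E]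
    {w : ι → ℝ} {s : ℝ} {f g : ι → E} (hw : ∀ i, 0 ≤ w i) (hs : 1 ≤ s)
    (hf : Summable fun i => w i * ‖f i‖ ^ s) (hg : Summable fun i => w i * ‖g i‖ ^ s) :
    Summable (fun i => w i * ‖f i - g i‖ ^ s) ∧
      ∑' i, w i * ‖f i - g i‖ ^ s
        ≤ 2 ^ (s - 1) * (∑' i, w i * ‖f i‖ ^ s + ∑' i, w i * ‖g i‖ ^ s) := by
  have hle : ∀ i,
      w i * ‖f i - g i‖ ^ s ≤ 2 ^ (s - 1) * (w i * ‖f i‖ ^ s + w i * ‖g i‖ ^ s) := fun i => by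
    have := mul_le_mul_of_nonneg_left (norm_sub_rpow_le (f i) (g i) hs) (hw i)
    linarith
  have hmaj := (hf.add hg).mul_left (2 ^ (s - 1))
  have hsum := hmaj.of_nonneg_of_le (fun i => mul_nonneg (hw i) (by positivity)) hle
  refine ⟨hsum, (hsum.tsum_le_tsum hle hmaj).trans_eq ?_⟩
  rw [tsum_mul_left, hf.tsum_add hg]

lemma tendsto_one_add_abs_rpow_rpow_cofinite {s k : ℝ} (hs : 0 < s) (hk : k < 0) :
    Tendsto (fun m : ℤ => (1 + |(m : ℝ)| ^ s) ^ k) cofinite (𝓝 0) := by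
  have habs : Tendsto (fun m : ℤ => |(m : ℝ)|) cofinite atTop := by
    simpa only [Function.comp_def, Real.norm_eq_abs] using
      tendsto_norm_comp_cofinite_atTop_of_isClosedEmbedding Int.isClosedEmbedding_coe_real
  have hpow : Tendsto (fun x : ℝ => x ^ k) atTop (𝓝 0) := by
    simpa using tendsto_rpow_neg_atTop (neg_pos.2 hk)
  exact hpow.comp (tendsto_atTop_add_const_left _ 1 ((tendsto_rpow_atTop hs).comp habs))

lemma one_add_abs_rpow_rpow_le_one (m : ℤ) {s k : ℝ} (hk : k ≤ 0) :
    (1 + |(m : ℝ)| ^ s) ^ k ≤ 1 :=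
  Real.rpow_le_one_of_one_le_of_nonpos (le_add_of_nonneg_right (by positivity)) hk

lemma tsum_le_rpow_of_hNorm_le {k s C : ℝ} {w : ℤ → ℝ} {p : ℤ → ℂ} (hs : 0 < s)
    (hw : ∀ m, 0 ≤ w m) (h : hNorm k s w p ≤ C) :
    ∑' m : ℤ, w m * (1 + |(m : ℝ)| ^ s) ^ k * ‖p m‖ ^ s ≤ C ^ s := by
  have hT : 0 ≤ ∑' m : ℤ, w m * (1 + |(m : ℝ)| ^ s) ^ k * ‖p m‖ ^ s :=
    tsum_nonneg fun m => mul_nonneg (mul_nonneg (hw m) (by positivity)) (by positivity)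
  calc ∑' m : ℤ, w m * (1 + |(m : ℝ)| ^ s) ^ k * ‖p m‖ ^ s = hNorm k s w p ^ s := by
        rw [hNorm, one_div, Real.rpow_inv_rpow hT hs.ne']
    _ ≤ C ^ s := Real.rpow_le_rpow (Real.rpow_nonneg hT _) h hs.le

lemma hMem_of_summable {k s : ℝ} {w : ℤ → ℝ} {p : ℤ → ℂ} (hk : k ≤ 0)
    (hw : ∀ m, 0 ≤ w m) (h : Summable fun m => w m * ‖p m‖ ^ s) : hMem k s w p :=
  h.of_nonneg_of_le (fun m => mul_nonneg (mul_nonneg (hw m) (by positivity)) (by positivity))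
    fun m => mul_le_mul_of_nonneg_right
      (mul_le_of_le_one_right (hw m) (one_add_abs_rpow_rpow_le_one m hk)) (by positivity)

/-- if `k < 0`, the inclusion `l^s_{ℂ,w} → h^{k,s}` is compact. -/
theorem stmt_7 (s k : ℝ) (hs : 1 ≤ s) (hk : k < 0) (w : ℤ → ℝ)
    (hw : ∀ m, 0 < w m) :
    ∀ F : ℕ → ℤ → ℂ, (∀ n, hMem 0 s w (F n)) →
      (∃ C : ℝ, ∀ n, hNorm 0 s w (F n) ≤ C) →
      ∃ φ : ℕ → ℕ, StrictMono φ ∧ ∃ p : ℤ → ℂ, hMem k s w p ∧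
        Tendsto (fun n => hNorm k s w (F (φ n) - p)) atTop (𝓝 0) := by
  rintro F hF ⟨C, hC⟩
  have hs0 : 0 < s := by linarith
  have hw0 : ∀ m, 0 ≤ w m := fun m => (hw m).le
  have hFs : ∀ n, Summable fun m => w m * ‖F n m‖ ^ s := fun n => by simpa [hMem] using hF n
  have hFC : ∀ n, ∑' m, w m * ‖F n m‖ ^ s ≤ C ^ s := fun n => by
    simpa using tsum_le_rpow_of_hNorm_le hs0 hw0 (hC n)
  obtain ⟨φ, hφ, p, hpt, hp, hpC⟩ :=
    exists_strictMono_tendsto_of_tsum_mul_rpow_le hw hs0 hFs hFC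
  have hdiff := fun n => summable_and_tsum_mul_norm_sub_rpow_le hw0 hs (hFs (φ n)) hp
  have hdiff_lim : ∀ m, Tendsto (fun n => w m * ‖F (φ n) m - p m‖ ^ s) atTop (𝓝 0) :=
    fun m => by simpa [Real.zero_rpow hs0.ne'] using
      (((hpt m).sub_const (p m)).norm.rpow_const (Or.inr hs0.le)).const_mul (w m)
  have hweighted := tendsto_tsum_mul_of_tendsto_cofinite (fun m => by positivity)
    (tendsto_one_add_abs_rpow_rpow_cofinite hs0 hk) (fun n m => mul_nonneg (hw0 m) (by positivity))
    (fun n => (hdiff n).1)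
    (fun n => (hdiff n).2.trans
      (mul_le_mul_of_nonneg_left (add_le_add (hFC (φ n)) hpC) (by positivity))) hdiff_lim
  refine ⟨φ, hφ, p, hMem_of_summable hk.le hw0 hp, ?_⟩
  have hroot := hweighted.rpow_const (Or.inr (by positivity : (0:ℝ) ≤ 1 / s))
  rw [Real.zero_rpow (by positivity)] at hroot
  convert hroot using 2 with n
  simp only [hNorm, Pi.sub_apply, mul_assoc, mul_left_comm]
end
end

section
/- (Pitt's property for weighted Sobolev sequence spaces) Let s > t ≥ 1 and k ∈ ℝ. Then every bounded linear operator T : h^{k,s}_{ℂ,w} → h^{k,t}_{ℂ,w} is compact. -/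
/-!
The space `h^{k,r}_{ℂ,w}` is `L^r` of `ℤ` for the weighted counting measure
`μ_r {m} = w_m (1 + |m|^r)^k`, so the theorem is Pitt's theorem for an additive bounded map
`T : L^p(μ) → L^q(ν)`, `q < p`, on a countable discrete space whose points have finite positive
mass. A bounded sequence has a subsequence `xₙ` with `xₙ` and `T xₙ` pointwise convergent
(Tychonoff). If `T xₙ` were not Cauchy, differences `vₙ = x_{iₙ} - x_{jₙ}` would be bounded,
pointwise null, with `T vₙ` pointwise null and `‖T vₙ‖_q ≥ ε`. A gliding hump then extracts `vₙ`'s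
concentrated on pairwise disjoint finite sets, and for a sum of `N` of them
`‖∑ v‖_p ≲ N^{1/p}` while `‖∑ T v‖_q ≳ ε N^{1/q}`, contradicting boundedness of `T` for large
`N`. The limit of the Cauchy sequence is its pointwise limit, by Fatou's lemma.
-/

open Filter Topology

noncomputable section

open MeasureTheory ENNReal Function

theorem ENNReal.exists_nat_mul_rpow_add_lt {a b c : ℝ≥0∞} {β γ : ℝ} (hβ : 0 < β) (hβγ : β < γ)
    (ha : a ≠ 0) (hb : b ≠ ∞) (hc : c ≠ ∞) : ∃ N : ℕ, b * N ^ β + c < a * N ^ γ := by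
  have hgrow : Tendsto (fun N : ℕ => a * (N : ℝ≥0∞) ^ (γ - β)) atTop (𝓝 ⊤) := by
    have := ENNReal.Tendsto.const_mul (a := a) ((ENNReal.tendsto_rpow_at_top (sub_pos.2 hβγ)).comp
      ENNReal.tendsto_nat_nhds_top) (Or.inl top_ne_zero)
    rwa [ENNReal.mul_top ha] at this
  obtain ⟨N, hN, hN1⟩ := ((hgrow.eventually (lt_mem_nhds (add_lt_top.2 ⟨hb.lt_top, hc.lt_top⟩))).and
    (eventually_ge_atTop 1)).exists
  have hN0 : (N : ℝ≥0∞) ≠ 0 := by exact_mod_cast (Nat.one_le_iff_ne_zero.1 hN1)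
  have hNβ : 1 ≤ (N : ℝ≥0∞) ^ β := ENNReal.one_le_rpow (by exact_mod_cast hN1) hβ
  refine ⟨N, ?_⟩
  calc b * N ^ β + c ≤ (b + c) * N ^ β := by
        rw [add_mul]; exact add_le_add_right (le_mul_of_one_le_right' hNβ) _
    _ < a * N ^ (γ - β) * N ^ β :=
        ENNReal.mul_lt_mul_left (ENNReal.rpow_pos (pos_iff_ne_zero.2 hN0)
          (ENNReal.natCast_ne_top N)).ne' (ENNReal.rpow_ne_top_of_nonneg hβ.le
          (ENNReal.natCast_ne_top N)) hN
    _ = a * N ^ γ := by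
        rw [mul_assoc, ← ENNReal.rpow_add _ _ hN0 (ENNReal.natCast_ne_top N), sub_add_cancel]

theorem ENNReal.natCast_rpow_one_div_mul_rpow {r : ℝ} (hr : 0 < r) (N : ℕ) (c : ℝ≥0∞) :
    ((N : ℝ≥0∞) ^ (1 / r) * c) ^ r = N * c ^ r := by
  rw [ENNReal.mul_rpow_of_nonneg _ _ hr.le, ← ENNReal.rpow_mul, one_div_mul_cancel hr.ne',
    ENNReal.rpow_one]

namespace MeasureTheory

structure IsBoundedAdditiveMap {α E F : Type*} [MeasurableSpace α] [NormedAddCommGroup E]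
    [NormedAddCommGroup F] (T : (α → E) → α → F) (p : ℝ≥0∞) (μ : Measure α) (q : ℝ≥0∞)
    (ν : Measure α) (C : ℝ≥0∞) : Prop where
  map_add : ∀ f g, MemLp f p μ → MemLp g p μ → T (f + g) = T f + T g
  memLp : ∀ f, MemLp f p μ → MemLp (T f) q ν
  eLpNorm_le : ∀ f, MemLp f p μ → eLpNorm (T f) q ν ≤ C * eLpNorm f p μ

namespace IsBoundedAdditiveMap

variable {α E F : Type*} [MeasurableSpace α] [NormedAddCommGroup E] [NormedAddCommGroup F]
  {T : (α → E) → α → F} {p q C : ℝ≥0∞} {μ ν : Measure α}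

theorem map_zero (hT : IsBoundedAdditiveMap T p μ q ν C) : T 0 = 0 := by
  have h := hT.map_add 0 0 MemLp.zero MemLp.zero
  rwa [add_zero, left_eq_add] at h

theorem map_sub (hT : IsBoundedAdditiveMap T p μ q ν C) {f g : α → E} (hf : MemLp f p μ)
    (hg : MemLp g p μ) : T (f - g) = T f - T g := by
  rw [eq_sub_iff_add_eq, ← hT.map_add _ _ (hf.sub hg) hg, sub_add_cancel]

theorem map_sum (hT : IsBoundedAdditiveMap T p μ q ν C) {ι : Type*} (s : Finset ι)
    {f : ι → α → E} (hf : ∀ i, MemLp (f i) p μ) : T (∑ i ∈ s, f i) = ∑ i ∈ s, T (f i) := by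
  classical
  induction s using Finset.induction_on with
  | empty => simpa using hT.map_zero
  | insert i s hi ih =>
    rw [Finset.sum_insert hi, Finset.sum_insert hi,
      hT.map_add _ _ (hf i) (memLp_finsetSum' s fun j _ => hf j), ih]

end IsBoundedAdditiveMap

section Discrete

variable {α E : Type*} [MeasurableSpace α] [NormedAddCommGroup E] {μ : Measure α} {p : ℝ≥0∞}

theorem tendsto_eLpNorm_of_tendsto_rpow (hp0 : p ≠ 0) (hp_top : p ≠ ∞) {ι : Type*} {l : Filter ι}
    {f : ι → α → E} (hf : Tendsto (fun i => eLpNorm (f i) p μ ^ p.toReal) l (𝓝 0)) :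
    Tendsto (fun i => eLpNorm (f i) p μ) l (𝓝 0) := by
  have hr := ENNReal.toReal_pos hp0 hp_top
  have := ((ENNReal.continuous_rpow_const (y := p.toReal⁻¹)).tendsto 0).comp hf
  simpa [Function.comp_def, ENNReal.rpow_rpow_inv hr.ne', hr] using this

variable [MeasurableSingletonClass α]

theorem enorm_mul_measure_singleton_rpow_le_eLpNorm (hp0 : p ≠ 0) (hp_top : p ≠ ∞) (f : α → E)
    (a : α) : ‖f a‖ₑ * μ {a} ^ (1 / p.toReal) ≤ eLpNorm f p μ := by
  have hfa : ({a} : Set α).indicator (fun _ => f a) = ({a} : Set α).indicator f := by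
    ext b
    by_cases hb : b = a
    · subst hb; simp
    · simp [hb]
  rw [← eLpNorm_indicator_const (measurableSet_singleton a) hp0 hp_top, hfa]
  exact eLpNorm_indicator_le f

variable [Countable α]

theorem eLpNorm_rpow_eq_tsum (hp0 : p ≠ 0) (hp_top : p ≠ ∞) (f : α → E) :
    eLpNorm f p μ ^ p.toReal = ∑' a, ‖f a‖ₑ ^ p.toReal * μ {a} := by
  rw [eLpNorm_eq_lintegral_rpow_enorm_toReal hp0 hp_top, ← ENNReal.rpow_mul,
    one_div_mul_cancel (ENNReal.toReal_pos hp0 hp_top).ne', ENNReal.rpow_one, lintegral_countable']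

theorem eLpNorm_indicator_rpow_eq_tsum (hp0 : p ≠ 0) (hp_top : p ≠ ∞) (s : Set α) (f : α → E) :
    eLpNorm (s.indicator f) p μ ^ p.toReal =
      ∑' a, s.indicator (fun a => ‖f a‖ₑ ^ p.toReal * μ {a}) a := by
  rw [eLpNorm_rpow_eq_tsum hp0 hp_top]
  congr 1 with a
  by_cases ha : a ∈ s <;> simp [ha, ENNReal.zero_rpow_of_pos (ENNReal.toReal_pos hp0 hp_top)]

theorem tendsto_eLpNorm_indicator_finset (hp0 : p ≠ 0) (hp_top : p ≠ ∞) (hμ : ∀ a, μ {a} ≠ ∞)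
    {f : ℕ → α → E} (hf : ∀ a, Tendsto (fun n => f n a) atTop (𝓝 0)) (S : Finset α) :
    Tendsto (fun n => eLpNorm ((S : Set α).indicator (f n)) p μ) atTop (𝓝 0) := by
  have hr := ENNReal.toReal_pos hp0 hp_top
  refine tendsto_eLpNorm_of_tendsto_rpow hp0 hp_top ?_
  simp_rw [eLpNorm_indicator_rpow_eq_tsum hp0 hp_top, ← sum_eq_tsum_indicator]
  have hterm : ∀ a, Tendsto (fun n => ‖f n a‖ₑ ^ p.toReal * μ {a}) atTop (𝓝 0) := fun a => by
    have h0 : Tendsto (fun n => ‖f n a‖ₑ) atTop (𝓝 0) := by simpa using (hf a).enorm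
    have := ENNReal.Tendsto.mul_const
      (((ENNReal.continuous_rpow_const (y := p.toReal)).tendsto 0).comp h0) (Or.inr (hμ a))
    simpa [Function.comp_def, hr] using this
  simpa using tendsto_finsetSum S fun a _ => hterm a

theorem exists_finset_eLpNorm_indicator_compl_lt (hp0 : p ≠ 0) (hp_top : p ≠ ∞) {f : α → E}
    (hf : eLpNorm f p μ ≠ ∞) {ε : ℝ≥0∞} (hε : ε ≠ 0) :
    ∃ S : Finset α, eLpNorm ((S : Set α)ᶜ.indicator f) p μ < ε := by
  have hsum : ∑' a, ‖f a‖ₑ ^ p.toReal * μ {a} ≠ ∞ := by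
    rw [← eLpNorm_rpow_eq_tsum hp0 hp_top]
    exact ENNReal.rpow_ne_top_of_nonneg ENNReal.toReal_nonneg hf
  have htail :
      Tendsto (fun S : Finset α => eLpNorm ((S : Set α)ᶜ.indicator f) p μ) atTop (𝓝 0) := by
    refine tendsto_eLpNorm_of_tendsto_rpow hp0 hp_top ?_
    simp_rw [eLpNorm_indicator_rpow_eq_tsum hp0 hp_top, ← tsum_subtype]
    exact ENNReal.tendsto_tsum_compl_atTop_zero hsum
  exact (htail.eventually_lt_const (pos_iff_ne_zero.2 hε)).exists

theorem eLpNorm_sum_indicator_rpow (hp0 : p ≠ 0) (hp_top : p ≠ ∞) {ι : Type*} {D : ι → Set α}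
    (hD : Pairwise (Disjoint on D)) (f : ι → α → E) (s : Finset ι) :
    eLpNorm (∑ i ∈ s, (D i).indicator (f i)) p μ ^ p.toReal =
      ∑ i ∈ s, eLpNorm ((D i).indicator (f i)) p μ ^ p.toReal := by
  have hr := ENNReal.toReal_pos hp0 hp_top
  simp_rw [eLpNorm_rpow_eq_tsum hp0 hp_top]
  rw [← Summable.tsum_finsetSum fun _ _ => ENNReal.summable]
  congr 1 with a
  rw [← Finset.sum_mul, Finset.sum_apply]
  by_cases ha : ∃ i ∈ s, a ∈ D i
  · obtain ⟨i, hi, hai⟩ := ha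
    have hj : ∀ j ≠ i, a ∉ D j := fun j hji haj => (hD hji).ne_of_mem haj hai rfl
    rw [Finset.sum_eq_single_of_mem i hi fun j _ hji => Set.indicator_of_notMem (hj j hji) _,
      Finset.sum_eq_single_of_mem i hi fun j _ hji => by
        simp [Set.indicator_of_notMem (hj j hji), ENNReal.zero_rpow_of_pos hr]]
  · push Not at ha
    rw [Finset.sum_eq_zero fun i hi => Set.indicator_of_notMem (ha i hi) _,
      Finset.sum_eq_zero fun i hi => by
        simp [Set.indicator_of_notMem (ha i hi), ENNReal.zero_rpow_of_pos hr]]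
    simp [ENNReal.zero_rpow_of_pos hr]

theorem eLpNorm_sum_indicator_le (hp0 : p ≠ 0) (hp_top : p ≠ ∞) {D : ℕ → Set α}
    (hD : Pairwise (Disjoint on D)) {f : ℕ → α → E} {c : ℝ≥0∞}
    (hc : ∀ i, eLpNorm ((D i).indicator (f i)) p μ ≤ c) (N : ℕ) :
    eLpNorm (∑ i ∈ Finset.range N, (D i).indicator (f i)) p μ ≤ N ^ (1 / p.toReal) * c := by
  have hr := ENNReal.toReal_pos hp0 hp_top
  rw [← ENNReal.rpow_le_rpow_iff hr, eLpNorm_sum_indicator_rpow hp0 hp_top hD,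
    ENNReal.natCast_rpow_one_div_mul_rpow hr]
  calc ∑ i ∈ Finset.range N, eLpNorm ((D i).indicator (f i)) p μ ^ p.toReal
      ≤ ∑ _i ∈ Finset.range N, c ^ p.toReal :=
        Finset.sum_le_sum fun i _ => ENNReal.rpow_le_rpow (hc i) hr.le
    _ = N * c ^ p.toReal := by simp

theorem le_eLpNorm_sum_indicator (hp0 : p ≠ 0) (hp_top : p ≠ ∞) {D : ℕ → Set α}
    (hD : Pairwise (Disjoint on D)) {f : ℕ → α → E} {c : ℝ≥0∞}
    (hc : ∀ i, c ≤ eLpNorm ((D i).indicator (f i)) p μ) (N : ℕ) :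
    N ^ (1 / p.toReal) * c ≤ eLpNorm (∑ i ∈ Finset.range N, (D i).indicator (f i)) p μ := by
  have hr := ENNReal.toReal_pos hp0 hp_top
  rw [← ENNReal.rpow_le_rpow_iff hr, eLpNorm_sum_indicator_rpow hp0 hp_top hD,
    ENNReal.natCast_rpow_one_div_mul_rpow hr]
  calc (N : ℝ≥0∞) * c ^ p.toReal = ∑ _i ∈ Finset.range N, c ^ p.toReal := by simp
    _ ≤ ∑ i ∈ Finset.range N, eLpNorm ((D i).indicator (f i)) p μ ^ p.toReal :=
        Finset.sum_le_sum fun i _ => ENNReal.rpow_le_rpow (hc i) hr.le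

theorem eLpNorm_sum_le_of_indicator_compl_le (hp : 1 ≤ p) (hp_top : p ≠ ∞) {D : ℕ → Set α}
    (hD : Pairwise (Disjoint on D)) {x : ℕ → α → E} {M η : ℝ≥0∞}
    (hM : ∀ i, eLpNorm (x i) p μ ≤ M) (hη : ∀ i, eLpNorm ((D i)ᶜ.indicator (x i)) p μ ≤ η)
    (N : ℕ) :
    eLpNorm (∑ i ∈ Finset.range N, x i) p μ ≤ N ^ (1 / p.toReal) * M + N * η := by
  have hp0 : p ≠ 0 := (one_pos.trans_le hp).ne'
  calc eLpNorm (∑ i ∈ Finset.range N, x i) p μ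
      = eLpNorm ((∑ i ∈ Finset.range N, (D i).indicator (x i)) +
          ∑ i ∈ Finset.range N, (D i)ᶜ.indicator (x i)) p μ := by
        simp only [← Finset.sum_add_distrib, Set.indicator_self_add_compl]
    _ ≤ eLpNorm (∑ i ∈ Finset.range N, (D i).indicator (x i)) p μ +
          eLpNorm (∑ i ∈ Finset.range N, (D i)ᶜ.indicator (x i)) p μ :=
        eLpNorm_add_le .of_discrete .of_discrete hp
    _ ≤ N ^ (1 / p.toReal) * M + ∑ _i ∈ Finset.range N, η :=
        add_le_add
          (eLpNorm_sum_indicator_le (f := x) hp0 hp_top hD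
            (fun i => (eLpNorm_indicator_le _).trans (hM i)) N)
          ((eLpNorm_sum_le (fun _ _ => .of_discrete) hp).trans
            (Finset.sum_le_sum fun i _ => hη i))
    _ = N ^ (1 / p.toReal) * M + N * η := by simp

theorem le_eLpNorm_sum_of_indicator_compl_le (hp : 1 ≤ p) (hp_top : p ≠ ∞) {D : ℕ → Set α}
    (hD : Pairwise (Disjoint on D)) {y : ℕ → α → E} {ε η : ℝ≥0∞}
    (hε : ∀ i, ε ≤ eLpNorm (y i) p μ) (hη : ∀ i, eLpNorm ((D i)ᶜ.indicator (y i)) p μ ≤ η)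
    (N : ℕ) :
    N ^ (1 / p.toReal) * (ε - η) ≤ eLpNorm (∑ i ∈ Finset.range N, y i) p μ + N * η := by
  have hp0 : p ≠ 0 := (one_pos.trans_le hp).ne'
  have hcore : ∀ i, ε - η ≤ eLpNorm ((D i).indicator (y i)) p μ := fun i => by
    rw [tsub_le_iff_right]
    calc ε ≤ eLpNorm (y i) p μ := hε i
      _ = eLpNorm ((D i).indicator (y i) + (D i)ᶜ.indicator (y i)) p μ := by
        rw [Set.indicator_self_add_compl]
      _ ≤ eLpNorm ((D i).indicator (y i)) p μ + η :=
        (eLpNorm_add_le .of_discrete .of_discrete hp).trans (add_le_add_right (hη i) _)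
  calc N ^ (1 / p.toReal) * (ε - η)
      ≤ eLpNorm (∑ i ∈ Finset.range N, (D i).indicator (y i)) p μ :=
        le_eLpNorm_sum_indicator hp0 hp_top hD hcore N
    _ = eLpNorm ((∑ i ∈ Finset.range N, y i) -
          ∑ i ∈ Finset.range N, (D i)ᶜ.indicator (y i)) p μ := by
        simp only [← Finset.sum_sub_distrib, Set.indicator_compl, _root_.sub_sub_cancel]
    _ ≤ eLpNorm (∑ i ∈ Finset.range N, y i) p μ +
          eLpNorm (∑ i ∈ Finset.range N, (D i)ᶜ.indicator (y i)) p μ :=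
        eLpNorm_sub_le .of_discrete .of_discrete hp
    _ ≤ eLpNorm (∑ i ∈ Finset.range N, y i) p μ + N * η := by
        refine add_le_add_right ?_ _
        calc eLpNorm (∑ i ∈ Finset.range N, (D i)ᶜ.indicator (y i)) p μ
            ≤ ∑ _i ∈ Finset.range N, η :=
              (eLpNorm_sum_le (fun _ _ => .of_discrete) hp).trans
                (Finset.sum_le_sum fun i _ => hη i)
          _ = N * η := by simp

theorem eLpNorm_indicator_compl_sdiff_le (hp : 1 ≤ p) {S T U : Set α} (hST : S ⊆ T) (hUT : U ⊆ T)
    {f : α → E} :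
    eLpNorm ((T \ S)ᶜ.indicator f) p μ ≤
      eLpNorm (S.indicator f) p μ + eLpNorm (Uᶜ.indicator f) p μ := by
  rw [Set.compl_sdiff, Set.indicator_union_of_disjoint
    (Set.disjoint_compl_right_iff_subset.2 hST)]
  refine (eLpNorm_add_le .of_discrete .of_discrete hp).trans (add_le_add_right ?_ _)
  exact eLpNorm_mono fun a => norm_indicator_le_of_subset (Set.compl_subset_compl.2 hUT) _ a

variable {F : Type*} [NormedAddCommGroup F] {ν : Measure α} {q : ℝ≥0∞}

theorem exists_finset_disjoint_indicator_compl_le (hp : 1 ≤ p) (hp_top : p ≠ ∞) (hq : 1 ≤ q)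
    (hq_top : q ≠ ∞) (hμ : ∀ a, μ {a} ≠ ∞) (hν : ∀ a, ν {a} ≠ ∞) {x : ℕ → α → E}
    {y : ℕ → α → F} (hx : ∀ n, eLpNorm (x n) p μ ≠ ∞) (hy : ∀ n, eLpNorm (y n) q ν ≠ ∞)
    (hx0 : ∀ a, Tendsto (fun n => x n a) atTop (𝓝 0))
    (hy0 : ∀ a, Tendsto (fun n => y n a) atTop (𝓝 0)) {η : ℝ≥0∞} (hη : η ≠ 0) (n₀ : ℕ)
    (S : Finset α) :
    ∃ n > n₀, ∃ D : Finset α, Disjoint S D ∧ eLpNorm ((D : Set α)ᶜ.indicator (x n)) p μ ≤ η ∧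
      eLpNorm ((D : Set α)ᶜ.indicator (y n)) q ν ≤ η := by
  classical
  have hp0 : p ≠ 0 := (one_pos.trans_le hp).ne'
  have hq0 : q ≠ 0 := (one_pos.trans_le hq).ne'
  have hη2 : 0 < η / 2 := ENNReal.half_pos hη
  obtain ⟨n, ⟨hxS, hyS⟩, hn⟩ :=
    ((((tendsto_eLpNorm_indicator_finset hp0 hp_top hμ hx0 S).eventually_le_const hη2).and
      ((tendsto_eLpNorm_indicator_finset hq0 hq_top hν hy0 S).eventually_le_const hη2)).and
      (eventually_gt_atTop n₀)).exists
  obtain ⟨Tx, hTx⟩ := exists_finset_eLpNorm_indicator_compl_lt hp0 hp_top (hx n) hη2.ne'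
  obtain ⟨Ty, hTy⟩ := exists_finset_eLpNorm_indicator_compl_lt hq0 hq_top (hy n) hη2.ne'
  set T := S ∪ Tx ∪ Ty
  have hST : (S : Set α) ⊆ T := by simp [T]
  have hTxT : (Tx : Set α) ⊆ T := fun a ha => by simp [T, Finset.mem_coe.1 ha]
  have hTyT : (Ty : Set α) ⊆ T := fun a ha => by simp [T, Finset.mem_coe.1 ha]
  refine ⟨n, hn, T \ S, Finset.disjoint_sdiff, ?_, ?_⟩ <;> rw [Finset.coe_sdiff]
  · exact ((eLpNorm_indicator_compl_sdiff_le (f := x n) hp hST hTxT).trans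
      (add_le_add hxS hTx.le)).trans_eq (ENNReal.add_halves η)
  · exact ((eLpNorm_indicator_compl_sdiff_le (f := y n) hq hST hTyT).trans
      (add_le_add hyS hTy.le)).trans_eq (ENNReal.add_halves η)

theorem exists_subseq_pairwise_disjoint_indicator_compl_le (hp : 1 ≤ p) (hp_top : p ≠ ∞)
    (hq : 1 ≤ q) (hq_top : q ≠ ∞) (hμ : ∀ a, μ {a} ≠ ∞) (hν : ∀ a, ν {a} ≠ ∞)
    {x : ℕ → α → E} {y : ℕ → α → F} (hx : ∀ n, eLpNorm (x n) p μ ≠ ∞)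
    (hy : ∀ n, eLpNorm (y n) q ν ≠ ∞) (hx0 : ∀ a, Tendsto (fun n => x n a) atTop (𝓝 0))
    (hy0 : ∀ a, Tendsto (fun n => y n a) atTop (𝓝 0)) {η : ℝ≥0∞} (hη : η ≠ 0) :
    ∃ φ : ℕ → ℕ, StrictMono φ ∧ ∃ D : ℕ → Set α, Pairwise (Disjoint on D) ∧
      ∀ i, eLpNorm ((D i)ᶜ.indicator (x (φ i))) p μ ≤ η ∧
        eLpNorm ((D i)ᶜ.indicator (y (φ i))) q ν ≤ η := by
  classical
  obtain ⟨g, hgP, hgr⟩ := exists_seq_of_forall_finset_exists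
    (fun b : ℕ × Finset α => eLpNorm ((b.2 : Set α)ᶜ.indicator (x b.1)) p μ ≤ η ∧
      eLpNorm ((b.2 : Set α)ᶜ.indicator (y b.1)) q ν ≤ η)
    (fun b b' => b.1 < b'.1 ∧ Disjoint b.2 b'.2) fun s _ => by
      obtain ⟨n, hn, D, hD, hDx, hDy⟩ := exists_finset_disjoint_indicator_compl_le hp hp_top hq
        hq_top hμ hν hx hy hx0 hy0 hη (s.sup Prod.fst) (s.biUnion Prod.snd)
      exact ⟨(n, D), ⟨hDx, hDy⟩, fun b hb => ⟨(Finset.le_sup hb).trans_lt hn,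
        hD.mono_left (Finset.subset_biUnion_of_mem _ hb)⟩⟩
  refine ⟨fun i => (g i).1, fun m n hmn => (hgr m n hmn).1, fun i => (g i).2,
    fun m n hmn => ?_, hgP⟩
  rcases hmn.lt_or_gt with h | h
  · exact Finset.disjoint_coe.2 (hgr m n h).2
  · exact Finset.disjoint_coe.2 (hgr n m h).2.symm

theorem exists_subseq_tendsto_of_eLpNorm_le [ProperSpace E] (hp0 : p ≠ 0) (hp_top : p ≠ ∞)
    (hμ : ∀ a, μ {a} ≠ 0) {x : ℕ → α → E} {M : ℝ≥0∞} (hM_top : M ≠ ∞)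
    (hM : ∀ n, eLpNorm (x n) p μ ≤ M) :
    ∃ φ : ℕ → ℕ, StrictMono φ ∧ ∃ l : α → E, ∀ a, Tendsto (fun n => x (φ n) a) atTop (𝓝 (l a)) := by
  have hr := ENNReal.toReal_pos hp0 hp_top
  set c : α → ℝ≥0∞ := fun a => M / μ {a} ^ (1 / p.toReal)
  have hc : ∀ n a, x n a ∈ Metric.closedBall (0 : E) (c a).toReal := fun n a => by
    have hμa : μ {a} ^ (1 / p.toReal) ≠ 0 := by simp [hμ a, hr]
    have hca : c a ≠ ∞ := ENNReal.div_ne_top hM_top hμa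
    rw [mem_closedBall_zero_iff, ← toReal_enorm]
    refine ENNReal.toReal_mono hca ((ENNReal.le_div_iff_mul_le (Or.inl hμa) (Or.inr hM_top)).2 ?_)
    exact (enorm_mul_measure_singleton_rpow_le_eLpNorm hp0 hp_top _ a).trans (hM n)
  obtain ⟨l, -, φ, hφ, hl⟩ := (isCompact_univ_pi fun a => isCompact_closedBall (0 : E)
    (c a).toReal).tendsto_subseq fun n => Set.mem_univ_pi.2 (hc n)
  exact ⟨φ, hφ, l, tendsto_pi_nhds.1 hl⟩

namespace IsBoundedAdditiveMap

variable {T : (α → E) → α → F} {C : ℝ≥0∞}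

theorem natCast_rpow_mul_le (hT : IsBoundedAdditiveMap T p μ q ν C) (hq : 1 ≤ q) (hqp : q < p)
    (hp_top : p ≠ ∞) (hμ : ∀ a, μ {a} ≠ ∞) (hν : ∀ a, ν {a} ≠ ∞) {x : ℕ → α → E}
    (hx : ∀ n, MemLp (x n) p μ) {M : ℝ≥0∞} (hM : ∀ n, eLpNorm (x n) p μ ≤ M)
    (hx0 : ∀ a, Tendsto (fun n => x n a) atTop (𝓝 0))
    (hTx0 : ∀ a, Tendsto (fun n => T (x n) a) atTop (𝓝 0)) {ε : ℝ≥0∞} (hε0 : ε ≠ 0)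
    (hε : ε ≠ ∞) (hTx : ∀ n, ε ≤ eLpNorm (T (x n)) q ν) (N : ℕ) :
    N ^ (1 / q.toReal) * (ε / 2) ≤ C * M * N ^ (1 / p.toReal) + (C + 1) := by
  have hp : 1 ≤ p := hq.trans hqp.le
  have hq_top : q ≠ ∞ := (hqp.trans_le le_top).ne
  -- `η ≤ ε / 2` keeps the mass of each block above `ε / 2`, `η ≤ 1 / N` keeps the `N` error terms
  -- below `1` in total.
  set η := min (ε / 2) (N : ℝ≥0∞)⁻¹
  have hη0 : η ≠ 0 := by simp [η, hε0, ENNReal.natCast_ne_top]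
  have hNη : N * η ≤ 1 :=
    (mul_le_mul_right (min_le_right _ _) _).trans (ENNReal.mul_inv_le_one _)
  have hεη : ε / 2 ≤ ε - η :=
    (ENNReal.sub_half hε).symm.le.trans (tsub_le_tsub_left (min_le_left _ _) ε)
  obtain ⟨φ, -, D, hD, hDx⟩ := exists_subseq_pairwise_disjoint_indicator_compl_le hp hp_top hq
    hq_top hμ hν (fun n => (hx n).eLpNorm_ne_top) (fun n => (hT.memLp _ (hx n)).eLpNorm_ne_top)
    hx0 hTx0 hη0
  have hsum := hT.map_sum (Finset.range N) fun i => hx (φ i)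
  have hsum_memLp : MemLp (∑ i ∈ Finset.range N, x (φ i)) p μ :=
    memLp_finsetSum' _ fun i _ => hx (φ i)
  calc N ^ (1 / q.toReal) * (ε / 2) ≤ N ^ (1 / q.toReal) * (ε - η) := by gcongr
    _ ≤ eLpNorm (∑ i ∈ Finset.range N, T (x (φ i))) q ν + N * η :=
        le_eLpNorm_sum_of_indicator_compl_le hq hq_top hD (fun i => hTx _) (fun i => (hDx i).2) N
    _ ≤ C * (N ^ (1 / p.toReal) * M + N * η) + N * η := by
        rw [← hsum]
        refine add_le_add_left ((hT.eLpNorm_le _ hsum_memLp).trans (mul_le_mul_right ?_ C)) _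
        exact eLpNorm_sum_le_of_indicator_compl_le hp hp_top hD (fun i => hM _)
          (fun i => (hDx i).1) N
    _ ≤ C * (N ^ (1 / p.toReal) * M + 1) + 1 := by gcongr
    _ = C * M * N ^ (1 / p.toReal) + (C + 1) := by ring

theorem tendsto_eLpNorm_map_of_tendsto_zero (hT : IsBoundedAdditiveMap T p μ q ν C)
    (hq : 1 ≤ q) (hqp : q < p) (hp_top : p ≠ ∞) (hμ : ∀ a, μ {a} ≠ ∞) (hν : ∀ a, ν {a} ≠ ∞)
    (hC : C ≠ ∞) {x : ℕ → α → E} (hx : ∀ n, MemLp (x n) p μ) {M : ℝ≥0∞} (hM_top : M ≠ ∞)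
    (hM : ∀ n, eLpNorm (x n) p μ ≤ M) (hx0 : ∀ a, Tendsto (fun n => x n a) atTop (𝓝 0))
    (hTx0 : ∀ a, Tendsto (fun n => T (x n) a) atTop (𝓝 0)) :
    Tendsto (fun n => eLpNorm (T (x n)) q ν) atTop (𝓝 0) := by
  by_contra h
  rw [ENNReal.tendsto_atTop_zero] at h
  push Not at h
  obtain ⟨ε, hε0, hε⟩ := h
  obtain ⟨ψ, hψ, hψε⟩ := extraction_of_frequently_atTop (frequently_atTop.2 hε)
  have hq0 : 0 < q.toReal := ENNReal.toReal_pos (one_pos.trans_le hq).ne' (hqp.trans_le le_top).ne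
  have hqp' : q.toReal < p.toReal := ENNReal.toReal_strict_mono hp_top hqp
  obtain ⟨N, hN⟩ := ENNReal.exists_nat_mul_rpow_add_lt (one_div_pos.2 (hq0.trans hqp'))
    (one_div_lt_one_div_of_lt hq0 hqp') (ENNReal.half_pos hε0.ne').ne'
    (ENNReal.mul_ne_top hC hM_top) (ENNReal.add_ne_top.2 ⟨hC, ENNReal.one_ne_top⟩)
  refine hN.not_ge ?_
  rw [mul_comm]
  exact hT.natCast_rpow_mul_le hq hqp hp_top hμ hν (fun n => hx (ψ n)) (fun n => hM _)
    (fun a => (hx0 a).comp hψ.tendsto_atTop) (fun a => (hTx0 a).comp hψ.tendsto_atTop)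
    hε0.ne' (ne_top_of_lt (hψε 0)) (fun n => (hψε n).le) N

theorem cauchy_of_tendsto_pointwise (hT : IsBoundedAdditiveMap T p μ q ν C) (hq : 1 ≤ q)
    (hqp : q < p) (hp_top : p ≠ ∞) (hμ : ∀ a, μ {a} ≠ ∞) (hν : ∀ a, ν {a} ≠ ∞) (hC : C ≠ ∞)
    {u : ℕ → α → E} (hu : ∀ n, MemLp (u n) p μ) {M : ℝ≥0∞} (hM_top : M ≠ ∞)
    (hM : ∀ n, eLpNorm (u n) p μ ≤ M) {l : α → E}
    (hl : ∀ a, Tendsto (fun n => u n a) atTop (𝓝 (l a)))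
    {y : α → F} (hy : ∀ a, Tendsto (fun n => T (u n) a) atTop (𝓝 (y a))) :
    ∀ ε > 0, ∃ N, ∀ i ≥ N, ∀ j ≥ N, eLpNorm (T (u i) - T (u j)) q ν ≤ ε := by
  by_contra! h
  obtain ⟨ε, hε, h⟩ := h
  choose i hi j hj hij using h
  have hi' : Tendsto i atTop atTop := tendsto_atTop_mono hi tendsto_id
  have hj' : Tendsto j atTop atTop := tendsto_atTop_mono hj tendsto_id
  have hTsub : ∀ N, T (u (i N) - u (j N)) = T (u (i N)) - T (u (j N)) := fun N =>
    hT.map_sub (hu _) (hu _)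
  have hv0 : ∀ a, Tendsto (fun N => (u (i N) - u (j N)) a) atTop (𝓝 0) := fun a => by
    simpa using ((hl a).comp hi').sub ((hl a).comp hj')
  have hTv0 : ∀ a, Tendsto (fun N => T (u (i N) - u (j N)) a) atTop (𝓝 0) := fun a => by
    simpa [hTsub] using ((hy a).comp hi').sub ((hy a).comp hj')
  have hlim := hT.tendsto_eLpNorm_map_of_tendsto_zero hq hqp hp_top hμ hν hC
    (fun N => (hu _).sub (hu _)) (ENNReal.add_ne_top.2 ⟨hM_top, hM_top⟩)
    (fun N => (eLpNorm_sub_le .of_discrete .of_discrete (hq.trans hqp.le)).trans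
      (add_le_add (hM _) (hM _))) hv0 hTv0
  obtain ⟨N, hN⟩ := (hlim.eventually (gt_mem_nhds hε)).exists
  exact (hij N).not_gt (by rwa [← hTsub])

theorem exists_subseq_tendsto_eLpNorm_sub [ProperSpace E] [ProperSpace F]
    (hT : IsBoundedAdditiveMap T p μ q ν C) (hq : 1 ≤ q) (hqp : q < p) (hp_top : p ≠ ∞)
    (hμ0 : ∀ a, μ {a} ≠ 0) (hμ : ∀ a, μ {a} ≠ ∞) (hν0 : ∀ a, ν {a} ≠ 0) (hν : ∀ a, ν {a} ≠ ∞)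
    (hC : C ≠ ∞) {x : ℕ → α → E} (hx : ∀ n, MemLp (x n) p μ) {M : ℝ≥0∞} (hM_top : M ≠ ∞)
    (hM : ∀ n, eLpNorm (x n) p μ ≤ M) :
    ∃ φ : ℕ → ℕ, StrictMono φ ∧ ∃ y : α → F, MemLp y q ν ∧
      Tendsto (fun n => eLpNorm (T (x (φ n)) - y) q ν) atTop (𝓝 0) := by
  have hTM : ∀ n, eLpNorm (T (x n)) q ν ≤ C * M := fun n =>
    (hT.eLpNorm_le _ (hx n)).trans (mul_le_mul_right (hM n) C)
  obtain ⟨φ₁, hφ₁, l, hl⟩ := exists_subseq_tendsto_of_eLpNorm_le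
    (one_pos.trans_le (hq.trans hqp.le)).ne' hp_top hμ0 hM_top hM
  obtain ⟨φ₂, hφ₂, y, hy⟩ := exists_subseq_tendsto_of_eLpNorm_le (one_pos.trans_le hq).ne'
    (hqp.trans_le le_top).ne hν0 (ENNReal.mul_ne_top hC hM_top) fun n => hTM (φ₁ n)
  have hcauchy := hT.cauchy_of_tendsto_pointwise hq hqp hp_top hμ hν hC
    (fun n => hx (φ₁ (φ₂ n))) hM_top (fun n => hM _) (fun a => (hl a).comp hφ₂.tendsto_atTop) hy
  have hy_memLp : MemLp y q ν :=
    ⟨.of_discrete, (Lp.eLpNorm_le_of_ae_tendsto (.of_forall fun n => hTM _)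
      (fun _ => .of_discrete) (.of_forall hy)).trans_lt
      (ENNReal.mul_lt_top hC.lt_top hM_top.lt_top)⟩
  refine ⟨φ₁ ∘ φ₂, hφ₁.comp hφ₂, y, hy_memLp, ENNReal.tendsto_atTop_zero.2 fun ε hε => ?_⟩
  obtain ⟨N, hN⟩ := hcauchy ε hε
  exact ⟨N, fun i hi => Lp.eLpNorm_le_of_ae_tendsto (eventually_ge_atTop N |>.mono fun j hj =>
    hN i hi j hj) (fun _ => .of_discrete) (.of_forall fun a => tendsto_const_nhds.sub (hy a))⟩

end IsBoundedAdditiveMap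

end Discrete

end MeasureTheory

def hMeasure (k r : ℝ) (w : ℤ → ℝ) : Measure ℤ :=
  Measure.count.withDensity fun m => ENNReal.ofReal (w m * (1 + |(m : ℝ)| ^ r) ^ k)

section hMeasure

variable {k r : ℝ} {w : ℤ → ℝ}

theorem hMeasure_singleton (m : ℤ) :
    hMeasure k r w {m} = ENNReal.ofReal (w m * (1 + |(m : ℝ)| ^ r) ^ k) := by
  rw [hMeasure, withDensity_apply _ (measurableSet_singleton m), lintegral_singleton,
    Measure.count_singleton, mul_one]

theorem hMeasure_singleton_ne_zero (hw : ∀ m, 0 < w m) (m : ℤ) : hMeasure k r w {m} ≠ 0 := by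
  rw [hMeasure_singleton, Ne, ENNReal.ofReal_eq_zero, not_le]
  exact mul_pos (hw m) (Real.rpow_pos_of_pos (by positivity) k)

theorem hMeasure_singleton_ne_top (m : ℤ) : hMeasure k r w {m} ≠ ∞ := by
  rw [hMeasure_singleton]; exact ENNReal.ofReal_ne_top

theorem weight_mul_norm_rpow_nonneg (hw : ∀ m, 0 ≤ w m) (p : ℤ → ℂ) (m : ℤ) :
    0 ≤ w m * (1 + |(m : ℝ)| ^ r) ^ k * ‖p m‖ ^ r :=
  mul_nonneg (mul_nonneg (hw m) (by positivity)) (by positivity)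

theorem eLpNorm_hMeasure_rpow (hr : 0 < r) (p : ℤ → ℂ) :
    eLpNorm p (ENNReal.ofReal r) (hMeasure k r w) ^ r =
      ∑' m, ENNReal.ofReal (w m * (1 + |(m : ℝ)| ^ r) ^ k * ‖p m‖ ^ r) := by
  have h := eLpNorm_rpow_eq_tsum (μ := hMeasure k r w) (ENNReal.ofReal_pos.2 hr).ne'
    ENNReal.ofReal_ne_top p
  rw [ENNReal.toReal_ofReal hr.le] at h
  rw [h]
  congr 1 with m
  rw [hMeasure_singleton, ← ofReal_norm, ENNReal.ofReal_rpow_of_nonneg (norm_nonneg _) hr.le,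
    ← ENNReal.ofReal_mul (by positivity), mul_comm]

theorem hNorm_eq_toReal_eLpNorm (hr : 0 < r) (hw : ∀ m, 0 ≤ w m) (p : ℤ → ℂ) :
    hNorm k r w p = (eLpNorm p (ENNReal.ofReal r) (hMeasure k r w)).toReal := by
  rw [← ENNReal.rpow_rpow_inv hr.ne' (eLpNorm _ _ _), eLpNorm_hMeasure_rpow hr,
    ← ENNReal.toReal_rpow, ENNReal.tsum_toReal_eq fun _ => ENNReal.ofReal_ne_top, hNorm, one_div]
  simp_rw [ENNReal.toReal_ofReal (weight_mul_norm_rpow_nonneg hw p _)]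

theorem hMem_iff_memLp (hr : 0 < r) (hw : ∀ m, 0 ≤ w m) (p : ℤ → ℂ) :
    hMem k r w p ↔ MemLp p (ENNReal.ofReal r) (hMeasure k r w) := by
  rw [MemLp, and_iff_right .of_discrete, ← ENNReal.rpow_lt_top_iff_of_pos hr,
    eLpNorm_hMeasure_rpow hr, lt_top_iff_ne_top]
  refine ⟨Summable.tsum_ofReal_ne_top, fun h => (ENNReal.summable_toReal h).congr fun m => ?_⟩
  exact ENNReal.toReal_ofReal (weight_mul_norm_rpow_nonneg hw p m)

theorem eLpNorm_eq_ofReal_hNorm (hr : 0 < r) (hw : ∀ m, 0 ≤ w m) {p : ℤ → ℂ}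
    (hp : hMem k r w p) :
    eLpNorm p (ENNReal.ofReal r) (hMeasure k r w) = ENNReal.ofReal (hNorm k r w p) := by
  rw [hNorm_eq_toReal_eLpNorm hr hw, ENNReal.ofReal_toReal
    ((hMem_iff_memLp hr hw p).1 hp).eLpNorm_ne_top]

end hMeasure

theorem isBoundedAdditiveMap_hMeasure {s t k : ℝ} (hs : 0 < s) (ht : 0 < t) {w : ℤ → ℝ}
    (hw : ∀ m, 0 ≤ w m) {T : (ℤ → ℂ) → ℤ → ℂ}
    (hTadd : ∀ p q, hMem k s w p → hMem k s w q → T (p + q) = T p + T q)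
    (hTmaps : ∀ p, hMem k s w p → hMem k t w (T p)) {C : ℝ}
    (hC : ∀ p, hMem k s w p → hNorm k t w (T p) ≤ C * hNorm k s w p) :
    IsBoundedAdditiveMap T (ENNReal.ofReal s) (hMeasure k s w) (ENNReal.ofReal t)
      (hMeasure k t w) (ENNReal.ofReal C) := by
  refine ⟨fun f g hf hg =>
      hTadd f g ((hMem_iff_memLp hs hw f).2 hf) ((hMem_iff_memLp hs hw g).2 hg),
    fun f hf => (hMem_iff_memLp ht hw _).1 (hTmaps f ((hMem_iff_memLp hs hw f).2 hf)),
    fun f hf => ?_⟩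
  have hf' := (hMem_iff_memLp hs hw f).2 hf
  rw [eLpNorm_eq_ofReal_hNorm ht hw (hTmaps f hf'), eLpNorm_eq_ofReal_hNorm hs hw hf',
    ← ENNReal.ofReal_mul' (hNorm_eq_toReal_eLpNorm hs hw f ▸ ENNReal.toReal_nonneg)]
  exact ENNReal.ofReal_le_ofReal (hC f hf')

theorem stmt_15_general (s t k : ℝ) (ht : 1 ≤ t) (hts : t < s) (w : ℤ → ℝ)
    (hw : ∀ m, 0 < w m) (T : (ℤ → ℂ) → ℤ → ℂ)
    (hTadd : ∀ p q : ℤ → ℂ, hMem k s w p → hMem k s w q →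
      T (p + q) = T p + T q)
    (hTmaps : ∀ p : ℤ → ℂ, hMem k s w p → hMem k t w (T p))
    (hTbdd : ∃ C : ℝ, ∀ p : ℤ → ℂ, hMem k s w p →
      hNorm k t w (T p) ≤ C * hNorm k s w p) :
    ∀ F : ℕ → ℤ → ℂ, (∀ n, hMem k s w (F n)) →
      (∃ C : ℝ, ∀ n, hNorm k s w (F n) ≤ C) →
      ∃ φ : ℕ → ℕ, StrictMono φ ∧ ∃ q : ℤ → ℂ, hMem k t w q ∧
        Tendsto (fun n => hNorm k t w (T (F (φ n)) - q)) atTop (𝓝 0) := by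
  rintro F hF ⟨M, hM⟩
  obtain ⟨C, hC⟩ := hTbdd
  have ht0 : 0 < t := one_pos.trans_le ht
  have hs0 : 0 < s := ht0.trans hts
  have hw' : ∀ m, 0 ≤ w m := fun m => (hw m).le
  have hT := isBoundedAdditiveMap_hMeasure hs0 ht0 hw' hTadd hTmaps hC
  have hFM : ∀ n, eLpNorm (F n) (ENNReal.ofReal s) (hMeasure k s w) ≤ ENNReal.ofReal M :=
    fun n => (eLpNorm_eq_ofReal_hNorm hs0 hw' (hF n)).trans_le (ENNReal.ofReal_le_ofReal (hM n))
  obtain ⟨φ, hφ, q, hq, hlim⟩ := hT.exists_subseq_tendsto_eLpNorm_sub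
    (ENNReal.one_le_ofReal.2 ht) ((ENNReal.ofReal_lt_ofReal_iff hs0).2 hts) ENNReal.ofReal_ne_top
    (hMeasure_singleton_ne_zero hw) hMeasure_singleton_ne_top (hMeasure_singleton_ne_zero hw)
    hMeasure_singleton_ne_top ENNReal.ofReal_ne_top (fun n => (hMem_iff_memLp hs0 hw' _).1 (hF n))
    ENNReal.ofReal_ne_top hFM
  refine ⟨φ, hφ, q, (hMem_iff_memLp ht0 hw' q).2 hq, ?_⟩
  simp_rw [hNorm_eq_toReal_eLpNorm ht0 hw']
  exact (ENNReal.tendsto_toReal ENNReal.zero_ne_top).comp hlim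

/-- Pitt's property: if `s > t ≥ 1`, every bounded linear
operator `T : h^{k,s}_{ℂ,w} → h^{k,t}_{ℂ,w}` is compact. -/
theorem stmt_15 (s t k : ℝ) (ht : 1 ≤ t) (hts : t < s) (w : ℤ → ℝ)
    (hw : ∀ m, 0 < w m) (T : (ℤ → ℂ) → ℤ → ℂ)
    (hTadd : ∀ p q : ℤ → ℂ, hMem k s w p → hMem k s w q →
      T (p + q) = T p + T q)
    (hTsmul : ∀ (a : ℂ) (p : ℤ → ℂ), hMem k s w p → T (a • p) = a • T p)
    (hTmaps : ∀ p : ℤ → ℂ, hMem k s w p → hMem k t w (T p))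
    (hTbdd : ∃ C : ℝ, ∀ p : ℤ → ℂ, hMem k s w p →
      hNorm k t w (T p) ≤ C * hNorm k s w p) :
    ∀ F : ℕ → ℤ → ℂ, (∀ n, hMem k s w (F n)) →
      (∃ C : ℝ, ∀ n, hNorm k s w (F n) ≤ C) →
      ∃ φ : ℕ → ℕ, StrictMono φ ∧ ∃ q : ℤ → ℂ, hMem k t w q ∧
        Tendsto (fun n => hNorm k t w (T (F (φ n)) - q)) atTop (𝓝 0) :=
  stmt_15_general s t k ht hts w hw T hTadd hTmaps hTbdd
end
end
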